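/- For every ℓ ≥ 2, the sequence (a_n) defined by the mex recursion is not a spectrum, i.e., there exist no real numbers α, β such that a_n = ⌊nα + β⌋ for all n ≥ 0. -/

import Mathlib

/-!
Up to index `2ℓ + 1` the sequence has a closed form: `a n = n + ℓ + 1` for `n ≤ ℓ` (the
`ℓ + 1` consecutive values `ℓ + 1, …, 2ℓ + 1`), and `a n = 2n + 1` for `ℓ < n ≤ 2ℓ + 1`, where
the even numbers are taken by `b 0, …, b ℓ`. Over `k` steps a spectrum `⌊nα + β⌋` changes by
strictly between `kα - 1` and `kα + 1`, so `a ℓ - a 0 = ℓ` forces `α < (ℓ + 1)/ℓ` while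
`a (2ℓ + 1) - a ℓ = 2ℓ + 2` forces `α > (2ℓ + 1)/(ℓ + 1)`, impossible for `ℓ ≥ 2`.
-/

/-- The minimum excluded value of a set of natural numbers. -/
noncomputable def mex (S : Set ℕ) : ℕ := sInf {m : ℕ | m ∉ S}

/-- `MexSeq ℓ a b` says that `a`, `b` are the sequences defined by
    `a 0 = ℓ+1`, `b 0 = 2ℓ+2`, and for `n ≥ 1`:
    `a n = mex({a i, b i : i < n} ∪ {0,…,ℓ})`, `b n = a n + n + ℓ + 1`. -/
def MexSeq (ℓ : ℕ) (a b : ℕ → ℕ) : Prop :=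
  a 0 = ℓ + 1 ∧ b 0 = 2 * ℓ + 2 ∧
  (∀ n : ℕ, 1 ≤ n →
    a n = mex ({m : ℕ | ∃ i < n, m = a i ∨ m = b i} ∪ {m : ℕ | m ≤ ℓ})) ∧
  (∀ n : ℕ, 1 ≤ n → b n = a n + n + ℓ + 1)

lemma mex_eq_of_forall_lt_mem {S : Set ℕ} {v : ℕ} (hv : v ∉ S) (hlt : ∀ m < v, m ∈ S) :
    mex S = v :=
  le_antisymm (Nat.sInf_le hv) (le_csInf ⟨v, hv⟩ fun _ hm => not_lt.1 fun h => hm (hlt _ h))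

/-- The closed form of `a n`, valid for `n ≤ 2ℓ + 1`. -/
def mexSeqA (ℓ n : ℕ) : ℕ := if n ≤ ℓ then n + ℓ + 1 else 2 * n + 1

lemma mex_mexSeqA {ℓ n : ℕ} (hn₁ : 1 ≤ n) (hn : n ≤ 2 * ℓ + 1) :
    mex ({m : ℕ | ∃ i < n, m = mexSeqA ℓ i ∨ m = mexSeqA ℓ i + i + ℓ + 1} ∪ {m : ℕ | m ≤ ℓ}) =
      mexSeqA ℓ n := by
  apply mex_eq_of_forall_lt_mem
  · rintro (⟨i, hi, h | h⟩ | h) <;> simp only [Set.mem_ofPred_eq, mexSeqA] at h <;>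
      split_ifs at h <;> omega
  · intro m hm
    by_cases hmℓ : m ≤ ℓ
    · exact Or.inr hmℓ
    refine Or.inl ?_
    by_cases hm₂ : m ≤ 2 * ℓ + 1
    · refine ⟨m - ℓ - 1, ?_, Or.inl ?_⟩ <;> simp only [mexSeqA] at hm ⊢ <;> split_ifs at hm ⊢ <;>
        omega
    -- Past `2ℓ + 1`, odd values are earlier `a i = 2i + 1` and even ones are `b i = 2i + 2ℓ + 2`.
    rcases Nat.even_or_odd' m with ⟨t, rfl | rfl⟩
    · refine ⟨t - ℓ - 1, ?_, Or.inr ?_⟩ <;> simp only [mexSeqA] at hm ⊢ <;>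
        split_ifs at hm ⊢ <;> omega
    · refine ⟨t, ?_, Or.inl ?_⟩ <;> simp only [mexSeqA] at hm ⊢ <;> split_ifs at hm ⊢ <;> omega

namespace MexSeq

variable {ℓ : ℕ} {a b : ℕ → ℕ}

lemma b_eq (hab : MexSeq ℓ a b) (n : ℕ) : b n = a n + n + ℓ + 1 := by
  rcases Nat.eq_zero_or_pos n with rfl | hn
  · rw [hab.1, hab.2.1]; ring
  · exact hab.2.2.2 n hn

lemma a_eq_mexSeqA (hab : MexSeq ℓ a b) {n : ℕ} (hn : n ≤ 2 * ℓ + 1) : a n = mexSeqA ℓ n := by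
  induction n using Nat.strong_induction_on with
  | _ n ih =>
    rcases Nat.eq_zero_or_pos n with rfl | hn₁
    · simp [hab.1, mexSeqA]
    have hprefix : {m : ℕ | ∃ i < n, m = a i ∨ m = b i} =
        {m : ℕ | ∃ i < n, m = mexSeqA ℓ i ∨ m = mexSeqA ℓ i + i + ℓ + 1} :=
      Set.ext fun m => exists_congr fun i => and_congr_right fun hi => by
        rw [hab.b_eq, ih i hi (by omega)]
    rw [hab.2.2.1 n hn₁, hprefix, mex_mexSeqA hn₁ hn]

end MexSeq

lemma sub_mul_lt_sub_add_one_of_eq_floor {c : ℕ → ℤ} {α β : ℝ}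
    (hc : ∀ n : ℕ, c n = ⌊(n : ℝ) * α + β⌋) (m n : ℕ) :
    ((n : ℝ) - m) * α < c n - c m + 1 := by
  have hn := Int.lt_floor_add_one ((n : ℝ) * α + β)
  have hm := Int.floor_le ((m : ℝ) * α + β)
  rw [← hc] at hn hm
  linarith

lemma add_one_le_mul_of_lt_add_one_mul {ℓ α : ℝ} (hℓ : 2 ≤ ℓ) (h : 2 * ℓ + 1 < (ℓ + 1) * α) :
    ℓ + 1 ≤ ℓ * α := by
  by_contra! hupper
  have h₁ := mul_lt_mul_of_pos_left hupper (by linarith : (0 : ℝ) < ℓ + 1)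
  have h₂ := mul_lt_mul_of_pos_left h (by linarith : (0 : ℝ) < ℓ)
  nlinarith

theorem mexSeq_not_spectrum (ℓ : ℕ) (hℓ : 2 ≤ ℓ) (a b : ℕ → ℕ)
    (hab : MexSeq ℓ a b) :
    ¬ ∃ α β : ℝ, ∀ n : ℕ, (a n : ℤ) = ⌊(n : ℝ) * α + β⌋ := by
  rintro ⟨α, β, h⟩
  have ha₀ : a 0 = ℓ + 1 := hab.1
  have haℓ : a ℓ = 2 * ℓ + 1 := by rw [hab.a_eq_mexSeqA (by omega), mexSeqA, if_pos le_rfl]; ring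
  have ha₂ℓ : a (2 * ℓ + 1) = 4 * ℓ + 3 := by
    rw [hab.a_eq_mexSeqA le_rfl, mexSeqA, if_neg (by omega)]; ring
  have hupper := sub_mul_lt_sub_add_one_of_eq_floor h 0 ℓ
  have hlower := sub_mul_lt_sub_add_one_of_eq_floor h (2 * ℓ + 1) ℓ
  simp only [ha₀, haℓ, ha₂ℓ] at hupper hlower
  push_cast at hupper hlower
  have hℓ' : (2 : ℝ) ≤ ℓ := by exact_mod_cast hℓ
  exact (add_one_le_mul_of_lt_add_one_mul hℓ' (by linarith)).not_gt (by linarith)
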